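/- Let h_n = 2·3^n − 1 be the number of elements of word length at most n in F₂, and let r_n be the number of elements of word length at most n that are conjugates of powers of α, β, or αβ. Then r_n / h_n → 0 as n → ∞. -/

import Mathlib

/-!
If the word `c` is cyclically reduced, every conjugate `w * mk c * w⁻¹` has reduced word
`v ++ c' ++ invRev v` with `c'` a rotation of `c`: peel letters off the end of `w`; a letter
cancelling against the first or last letter of `c` only rotates `c`, and once none cancels the
word is reduced as written. For `γ ∈ {α, β, αβ}` the reduced word of `γ ^ k` is cyclically
reduced of length `|k| * |γ|`, so an element `w * γ ^ k * w⁻¹` of length `≤ n` is determined by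
`v` of length `≤ n / 2`, by `γ`, by `k` with `|k| ≤ n` and by a rotation index `< n`. Hence
`r_n ≤ 3 (2n + 1) n h_{n / 2} = O(n² 3^(n / 2))`, while `h_n ≥ 3 ^ n`.
-/

abbrev F2 := FreeGroup (Fin 2)

def α : F2 := FreeGroup.of 0

def β : F2 := FreeGroup.of 1

/-- Number of reducible-type elements of word length at most `n`. -/
noncomputable def redBall (n : ℕ) : ℕ :=
  Nat.card {g : F2 | FreeGroup.norm g ≤ n ∧
    ∃ (w : F2) (k : ℤ) (γ : F2), k ≠ 0 ∧ γ ∈ ({α, β, α * β} : Set F2) ∧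
      g = w * γ ^ k * w⁻¹}

/-- Number of all elements of word length at most `n`. -/
noncomputable def ball (n : ℕ) : ℕ :=
  Nat.card {g : F2 | FreeGroup.norm g ≤ n}

namespace FreeGroup

variable {ι : Type*} {L : List (ι × Bool)}

theorem IsCyclicallyReduced.append_singleton_of_cons {a : ι × Bool} {l : List (ι × Bool)}
    (h : IsCyclicallyReduced (a :: l)) : IsCyclicallyReduced (l ++ [a]) := by
  rcases h with ⟨hred, hcyc⟩
  rw [IsReduced, List.isChain_cons] at hred
  refine ⟨List.isChain_append.mpr ⟨hred.2, List.isChain_singleton a, ?_⟩, ?_⟩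
  · rintro x hx _ ⟨⟩
    exact hcyc x (by simp [List.getLast?_cons, Option.mem_def.mp hx]) a rfl
  · rw [List.getLast?_concat]
    rintro _ ⟨⟩ y hy
    cases l with
    | nil => obtain ⟨⟩ := hy; exact fun _ => rfl
    | cons b l => exact hred.1 y hy

theorem IsCyclicallyReduced.rotate (h : IsCyclicallyReduced L) (n : ℕ) :
    IsCyclicallyReduced (L.rotate n) := by
  induction n generalizing L with
  | zero => simpa
  | succ n ih =>
    cases L with
    | nil => simp
    | cons a l => simpa using ih h.append_singleton_of_cons

theorem IsReduced.invRev (h : IsReduced L) : IsReduced (invRev L) := by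
  rw [IsReduced, FreeGroup.invRev, List.isChain_reverse, List.isChain_map]
  exact h.imp fun a b hab h => by simpa using (hab h.symm).symm

theorem IsCyclicallyReduced.invRev (h : IsCyclicallyReduced L) :
    IsCyclicallyReduced (invRev L) := by
  rcases h with ⟨hred, hcyc⟩
  refine ⟨hred.invRev, ?_⟩
  simp only [FreeGroup.invRev, List.getLast?_reverse, List.head?_reverse, List.head?_map,
    List.getLast?_map, Option.mem_map]
  rintro _ ⟨a, ha, rfl⟩ _ ⟨b, hb, rfl⟩ h
  simpa using (hcyc b hb a ha h.symm).symm

variable [DecidableEq ι]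

theorem toWord_pow_of_isCyclicallyReduced {x : FreeGroup ι}
    (h : IsCyclicallyReduced x.toWord) (n : ℕ) :
    (x ^ n).toWord = (List.replicate n x.toWord).flatten := by
  rw [toWord_pow, (h.flatten_replicate n).isReduced.reduce_eq]

theorem isCyclicallyReduced_toWord_zpow {x : FreeGroup ι}
    (h : IsCyclicallyReduced x.toWord) (k : ℤ) : IsCyclicallyReduced (x ^ k).toWord := by
  cases k with
  | ofNat n =>
    rw [Int.ofNat_eq_natCast, zpow_natCast, toWord_pow_of_isCyclicallyReduced h]
    exact h.flatten_replicate n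
  | negSucc n =>
    rw [zpow_negSucc, toWord_inv, toWord_pow_of_isCyclicallyReduced h]
    exact (h.flatten_replicate _).invRev

theorem norm_zpow_of_isCyclicallyReduced {x : FreeGroup ι}
    (h : IsCyclicallyReduced x.toWord) (k : ℤ) : norm (x ^ k) = k.natAbs * norm x := by
  have hpow (n : ℕ) : norm (x ^ n) = n * norm x := by
    simp [norm, toWord_pow_of_isCyclicallyReduced h]
  cases k with
  | ofNat n => simpa using hpow n
  | negSucc n => rw [zpow_negSucc, norm_inv_eq, hpow, Int.natAbs_negSucc]

theorem exists_toWord_conj_eq_append_rotate {c : List (ι × Bool)} (hc : IsCyclicallyReduced c)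
    (w : FreeGroup ι) : ∃ (v : FreeGroup ι) (i : ℕ),
      (w * mk c * w⁻¹).toWord = v.toWord ++ c.rotate i ++ invRev v.toWord := by
  suffices key : ∀ L, IsReduced L → ∀ c, IsCyclicallyReduced c → ∃ (v : FreeGroup ι) (i : ℕ),
      (mk L * mk c * (mk L)⁻¹).toWord = v.toWord ++ c.rotate i ++ invRev v.toWord by
    simpa only [mk_toWord] using key _ isReduced_toWord c hc
  intro L
  induction L using List.reverseRecOn with
  | nil => exact fun _ c hc => ⟨1, 0, by simp [hc.isReduced.reduce_eq]⟩
  | append_singleton L x ih =>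
    intro hL c hc
    have hL' : IsReduced L := hL.infix ⟨[], [x], by simp⟩
    have hmk : mk (L ++ [x]) = mk L * mk [x] := (mul_mk ..).symm
    obtain rfl | hne := eq_or_ne c []
    · exact ⟨1, 0, by rw [← one_eq_mk, mul_one, mul_inv_cancel]; rfl⟩
    have hinv : mk [(x.1, !x.2)] = (mk [x])⁻¹ := by simp [inv_mk, invRev]
    by_cases hhead : ∃ d, c = (x.1, !x.2) :: d
    · obtain ⟨d, rfl⟩ := hhead
      obtain ⟨v, i, hv⟩ := ih hL' _ (hc.rotate 1)
      refine ⟨v, 1 + i, ?_⟩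
      have hc' : mk ((x.1, !x.2) :: d) = (mk [x])⁻¹ * mk d := by rw [← hinv, mul_mk]; rfl
      have hrot : mk (((x.1, !x.2) :: d).rotate 1) = mk d * (mk [x])⁻¹ := by
        rw [← hinv, mul_mk]; simp
      rw [← List.rotate_rotate, ← hv, hmk, hc', hrot]
      group
    by_cases hlast : ∃ d, c = d ++ [x]
    · obtain ⟨d, rfl⟩ := hlast
      obtain ⟨v, i, hv⟩ := ih hL' _ (hc.rotate d.length)
      refine ⟨v, d.length + i, ?_⟩
      rw [← List.rotate_rotate, ← hv, hmk, List.rotate_append_length_eq, ← mul_mk, ← mul_mk]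
      group
    refine ⟨mk (L ++ [x]), 0, ?_⟩
    rw [List.rotate_zero, toWord_mk, hL.reduce_eq, inv_mk, mul_mk, mul_mk, toWord_mk]
    refine (IsReduced.append_overlap ?_ ?_ hne).reduce_eq
    · obtain ⟨y, d, rfl⟩ := List.exists_cons_of_ne_nil hne
      refine List.isChain_append.mpr ⟨hL, hc.isReduced, ?_⟩
      rw [List.getLast?_concat]
      rintro _ ⟨⟩ _ ⟨⟩ h
      by_contra h'
      have hy : y = (x.1, !x.2) := Prod.ext h.symm (Bool.eq_not.mpr (Ne.symm h'))
      exact hhead ⟨d, by rw [hy]⟩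
    · obtain ⟨d, z, rfl⟩ := (List.eq_nil_or_concat' c).resolve_left hne
      refine List.isChain_append.mpr ⟨hc.isReduced, hL.invRev, ?_⟩
      rw [List.getLast?_concat, show (invRev (L ++ [x])).head? = some (x.1, !x.2) by simp [invRev]]
      rintro _ ⟨⟩ _ ⟨⟩ h
      by_contra h'
      have hz : z = x := Prod.ext h (by simpa using h')
      exact hlast ⟨d, by rw [hz]⟩

theorem finite_setOf_norm_le [Finite ι] (n : ℕ) : {x : FreeGroup ι | norm x ≤ n}.Finite :=
  (List.finite_length_le _ n).preimage toWord_injective.injOn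

theorem exists_conj_rotate_of_norm_conj_zpow_le {γ : FreeGroup ι}
    (hγ : IsCyclicallyReduced γ.toWord) (hγ₁ : γ ≠ 1) (w : FreeGroup ι) {k : ℤ} (hk : k ≠ 0)
    {n : ℕ} (hn : norm (w * γ ^ k * w⁻¹) ≤ n) :
    ∃ (v : FreeGroup ι) (i : ℕ), norm v ≤ n / 2 ∧ k.natAbs ≤ n ∧ i < n ∧
      w * γ ^ k * w⁻¹ = v * mk ((γ ^ k).toWord.rotate i) * v⁻¹ := by
  set c := (γ ^ k).toWord
  obtain ⟨v, i, hv⟩ := exists_toWord_conj_eq_append_rotate (isCyclicallyReduced_toWord_zpow hγ k) w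
  rw [mk_toWord] at hv
  have hnorm : norm (w * γ ^ k * w⁻¹) = 2 * norm v + c.length := by
    simp only [norm, hv, List.length_append, List.length_rotate, invRev_length]
    ring
  have hk_le : k.natAbs ≤ c.length := by
    rw [← norm, norm_zpow_of_isCyclicallyReduced hγ k]
    exact Nat.le_mul_of_pos_right _ (Nat.pos_of_ne_zero (mt norm_eq_zero.mp hγ₁))
  have hc_pos : 0 < c.length := lt_of_lt_of_le (Int.natAbs_pos.mpr hk) hk_le
  refine ⟨v, i % c.length, by omega, by omega, by have := Nat.mod_lt i hc_pos; omega, ?_⟩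
  rw [List.rotate_mod, ← mk_toWord (x := w * γ ^ k * w⁻¹), hv, ← mul_mk, ← mul_mk, ← inv_mk,
    mk_toWord]

end FreeGroup

open FreeGroup

theorem isCyclicallyReduced_toWord_of_mem {γ : F2} (hγ : γ ∈ ({α, β, α * β} : Set F2)) :
    IsCyclicallyReduced γ.toWord := by
  rcases hγ with rfl | rfl | rfl
  · exact .singleton
  · exact .singleton
  · rw [show (α * β).toWord = [(0, true), (1, true)] from rfl]
    simp [isCyclicallyReduced_iff, FreeGroup.IsReduced]

theorem ne_one_of_mem {γ : F2} (hγ : γ ∈ ({α, β, α * β} : Set F2)) : γ ≠ 1 := by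
  rcases hγ with rfl | rfl | rfl <;> decide

theorem redBall_le_ball_mul (n : ℕ) : redBall n ≤ ball (n / 2) * (3 * (2 * n + 1) * n) := by
  set B := {v : F2 | norm v ≤ n / 2}
  let f : F2 × F2 × ℤ × ℕ → F2 := fun ⟨v, γ, k, i⟩ => v * mk ((γ ^ k).toWord.rotate i) * v⁻¹
  let D := B ×ˢ (({α, β, α * β} : Finset F2) : Set F2) ×ˢ (Finset.Icc (-n : ℤ) n : Set ℤ) ×ˢ
    (Finset.range n : Set ℕ)
  have hD : D.Finite := (finite_setOf_norm_le _).prod ((Finset.finite_toSet _).prod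
    ((Finset.finite_toSet _).prod (Finset.finite_toSet _)))
  have hsub : {g : F2 | norm g ≤ n ∧ ∃ (w : F2) (k : ℤ) (γ : F2), k ≠ 0 ∧
      γ ∈ ({α, β, α * β} : Set F2) ∧ g = w * γ ^ k * w⁻¹} ⊆ f '' D := by
    rintro g ⟨hg, w, k, γ, hk, hγ, rfl⟩
    obtain ⟨v, i, hv, hkn, hin, heq⟩ := exists_conj_rotate_of_norm_conj_zpow_le
      (isCyclicallyReduced_toWord_of_mem hγ) (ne_one_of_mem hγ) w hk hg
    refine ⟨(v, γ, k, i), ⟨hv, by simpa using hγ, ?_, by simpa using hin⟩, heq.symm⟩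
    simp only [Finset.coe_Icc, Set.mem_Icc]
    omega
  calc redBall n ≤ (f '' D).ncard :=
        (Nat.card_coe_set_eq _).trans_le (Set.ncard_le_ncard hsub (hD.image f))
    _ ≤ D.ncard := Set.ncard_image_le hD
    _ ≤ ball (n / 2) * (3 * (2 * n + 1) * n) := by
      simp only [D, Set.ncard_prod, Set.ncard_coe_finset, Int.card_Icc, Finset.card_range]
      rw [show (n + 1 - -n : ℤ).toNat = 2 * n + 1 by omega, ← Nat.card_coe_set_eq, mul_assoc 3]
      exact Nat.mul_le_mul_left _ (Nat.mul_le_mul_right _ Finset.card_le_three)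

theorem redBall_div_ball_le (hball : ∀ n, ball n = 2 * 3 ^ n - 1) (n : ℕ) :
    (redBall n : ℝ) / ball n ≤ 18 * (n ^ 2 * (√3)⁻¹ ^ n) := by
  have hsq : √3 ^ n * √3 ^ n = (3 : ℝ) ^ n := by rw [← mul_pow, Real.mul_self_sqrt (by norm_num)]
  have hnum : (redBall n : ℝ) ≤ 18 * n ^ 2 * √3 ^ n := by
    have h : redBall n ≤ 18 * n ^ 2 * 3 ^ (n / 2) :=
      calc redBall n ≤ ball (n / 2) * (3 * (2 * n + 1) * n) := redBall_le_ball_mul n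
        _ ≤ (2 * 3 ^ (n / 2)) * (9 * n ^ 2) :=
          Nat.mul_le_mul (by rw [hball]; omega) (by nlinarith [Nat.le_self_pow two_ne_zero n])
        _ = 18 * n ^ 2 * 3 ^ (n / 2) := by ring
    calc (redBall n : ℝ) ≤ 18 * n ^ 2 * (3 : ℝ) ^ (n / 2) := by exact_mod_cast h
      _ = 18 * n ^ 2 * √3 ^ (2 * (n / 2)) := by rw [pow_mul, Real.sq_sqrt (by norm_num)]
      _ ≤ 18 * n ^ 2 * √3 ^ n := by
        gcongr
        exacts [Real.one_le_sqrt.mpr (by norm_num), Nat.mul_div_le n 2]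
  have hden : √3 ^ n * √3 ^ n ≤ (ball n : ℝ) := by
    have h : 1 ≤ 3 ^ n := Nat.one_le_pow _ _ (by norm_num)
    rw [hsq, hball, Nat.cast_sub (by omega)]
    push_cast
    linarith [one_le_pow₀ (by norm_num : (1 : ℝ) ≤ 3) (n := n)]
  calc (redBall n : ℝ) / ball n ≤ 18 * n ^ 2 * √3 ^ n / (√3 ^ n * √3 ^ n) :=
        div_le_div₀ (by positivity) hnum (by positivity) hden
    _ = 18 * (n ^ 2 * (√3)⁻¹ ^ n) := by rw [inv_pow]; field_simp

/-- The proportion of reducible-type elements in the ball of radius `n` tends to `0`;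
here the number of all elements in the ball is `h n = 2·3^n − 1`. -/
theorem reducible_proportion_tendsto_zero
    (hball : ∀ n, ball n = 2 * 3 ^ n - 1) :
    Filter.Tendsto (fun n => (redBall n : ℝ) / (ball n : ℝ))
      Filter.atTop (nhds 0) := by
  have hr : |(√3)⁻¹| < 1 := by
    rw [abs_of_pos (by positivity)]
    exact inv_lt_one_of_one_lt₀ (Real.lt_sqrt (by norm_num) |>.mpr (by norm_num))
  have hlim := (tendsto_pow_const_mul_const_pow_of_abs_lt_one 2 hr).const_mul 18
  rw [mul_zero] at hlim
  exact squeeze_zero (fun n => by positivity) (redBall_div_ball_le hball) hlim
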